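/- arXiv:2506.23886 — 10 statements merged into one kernel-verified Lean document; each statement's English description precedes it below -/
import Mathlib

section
/- Let n ≥ 1, let ω = exp(2πi/(n+1)) ∈ ℂ, and let A be an (n+1)×(n+1) complex matrix. If there exists an invertible (n+1)×(n+1) complex matrix P such that P * A * P⁻¹ = ω • A, then the characteristic polynomial of A has the form X^(n+1) − c for some constant c ∈ ℂ (i.e., all coefficients of the characteristic polynomial in degrees 1 through n vanish). -/
/-!
Conjugation preserves the characteristic polynomial `p` of `A`, so `p` is also the characteristic
polynomial of `ω • A`. Substituting `ωX` for `X` turns the latter into `ω^(n+1) p = p`, so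
`ω^k p_k = p_k` for every coefficient; as `ω` is a primitive `(n+1)`-th root of unity, `p_k = 0`
for `0 < k < n + 1`, and the monic polynomial `p` of degree `n + 1` is `X^(n+1) + p_0`.
-/

open Matrix Polynomial

namespace Polynomial

theorem Monic.eq_X_pow_add_C_of_coeff_eq_zero {R : Type*} [Semiring R] {p : R[X]} (hp : p.Monic)
    (hdeg : p.natDegree ≠ 0) (hcoeff : ∀ k, 0 < k → k < p.natDegree → p.coeff k = 0) :
    p = X ^ p.natDegree + C (p.coeff 0) := by
  ext k
  rw [coeff_add, coeff_X_pow, coeff_C]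
  rcases Nat.eq_zero_or_pos k with rfl | hk0
  · simp [Ne.symm hdeg]
  rcases lt_trichotomy k p.natDegree with hlt | rfl | hgt
  · simp [hcoeff k hk0 hlt, hlt.ne, hk0.ne']
  · simp [hp.coeff_natDegree, hk0.ne']
  · simp [coeff_eq_zero_of_natDegree_lt hgt, hgt.ne', hk0.ne']

end Polynomial

namespace Matrix

variable {n R : Type*} [Fintype n] [DecidableEq n]

theorem charpoly_smul_comp_C_mul_X [CommRing R] (A : Matrix n n R) (c : R) :
    (c • A).charpoly.comp (C c * X) = C c ^ Fintype.card n * A.charpoly := by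
  have hcharmatrix : (charmatrix (c • A)).map (compRingHom (C c * X)) = C c • charmatrix A := by
    ext i j : 1
    by_cases h : i = j
    · subst h; simp [charmatrix_apply_eq, mul_sub]
    · simp [charmatrix_apply_ne _ _ _ h]
  rw [charpoly, ← coe_compRingHom_apply, RingHom.map_det, RingHom.mapMatrix_apply, hcharmatrix,
    det_smul, charpoly]

theorem coeff_charpoly_eq_zero_of_charpoly_smul_eq [CommRing R] [IsDomain R] {A : Matrix n n R}
    {ζ : R} (hζ : IsPrimitiveRoot ζ (Fintype.card n)) (h : (ζ • A).charpoly = A.charpoly)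
    {k : ℕ} (hk0 : 0 < k) (hk : k < Fintype.card n) :
    A.charpoly.coeff k = 0 := by
  have hfixed : A.charpoly.coeff k * ζ ^ k = A.charpoly.coeff k := by
    simpa only [h, comp_C_mul_X_coeff, ← C_pow, hζ.pow_eq_one, C_1, one_mul]
      using congr_arg (coeff · k) (charpoly_smul_comp_C_mul_X A ζ)
  by_contra hne
  exact hζ.pow_ne_one_of_pos_of_lt hk0.ne' hk ((mul_eq_left₀ hne).mp hfixed)

end Matrix

theorem charpoly_eq_pow_sub_const_of_similar_smul_general
    (n : ℕ) (ω : ℂ)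
    (hω : ω = Complex.exp (2 * Real.pi * Complex.I / (n + 1)))
    (A : Matrix (Fin (n + 1)) (Fin (n + 1)) ℂ)
    (P : Matrix (Fin (n + 1)) (Fin (n + 1)) ℂ) (hP : IsUnit P)
    (hsim : P * A * P⁻¹ = ω • A) :
    ∃ c : ℂ, A.charpoly = X ^ (n + 1) - C c := by
  have hprim : IsPrimitiveRoot ω (Fintype.card (Fin (n + 1))) := by
    simpa [hω] using Complex.isPrimitiveRoot_exp (n + 1) n.succ_ne_zero
  have hcharpoly : (ω • A).charpoly = A.charpoly := by
    rw [← hsim, ← hP.unit_spec, charpoly_units_conj]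
  have hdeg : A.charpoly.natDegree = n + 1 := by
    rw [charpoly_natDegree_eq_dim, Fintype.card_fin]
  refine ⟨-A.charpoly.coeff 0, ?_⟩
  have hshape := (charpoly_monic A).eq_X_pow_add_C_of_coeff_eq_zero (by omega) fun k hk0 hk =>
    coeff_charpoly_eq_zero_of_charpoly_smul_eq hprim hcharpoly hk0 (by simpa [hdeg] using hk)
  rw [hdeg] at hshape
  rwa [C_neg, sub_neg_eq_add]

/-- If an `(n+1) × (n+1)` complex matrix `A` is similar to `ω • A`, where
`ω = exp(2πi/(n+1))`, then the characteristic polynomial of `A` has the form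
`X^(n+1) - c` for some constant `c : ℂ`. -/
theorem charpoly_eq_pow_sub_const_of_similar_smul
    (n : ℕ) (hn : 1 ≤ n) (ω : ℂ)
    (hω : ω = Complex.exp (2 * Real.pi * Complex.I / (n + 1)))
    (A : Matrix (Fin (n + 1)) (Fin (n + 1)) ℂ)
    (P : Matrix (Fin (n + 1)) (Fin (n + 1)) ℂ) (hP : IsUnit P)
    (hsim : P * A * P⁻¹ = ω • A) :
    ∃ c : ℂ, A.charpoly = X ^ (n + 1) - C c :=
  charpoly_eq_pow_sub_const_of_similar_smul_general n ω hω A P hP hsim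
end

section
/- Let n ≥ 1, let ω = exp(2πi/(n+1)) ∈ ℂ, and let A be a nonzero (n+1)×(n+1) complex matrix which is diagonalizable, i.e., A = Q * diagonal(u) * Q⁻¹ for some invertible matrix Q and some u : Fin (n+1) → ℂ. If there exists an invertible (n+1)×(n+1) complex matrix P such that P * A * P⁻¹ = ω • A, then there exists c ∈ ℂ with c ≠ 0 such that the characteristic polynomial of A equals X^(n+1) − c^(n+1); equivalently, the eigenvalues of A are exactly c, ωc, ω²c, …, ωⁿc (each with multiplicity one). -/
open Matrix Polynomial

lemma my_charpoly_conj {m : Type*} [Fintype m] [DecidableEq m]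
    (P B : Matrix m m ℂ) (hP : IsUnit P) : (P * B * P⁻¹).charpoly = B.charpoly := by
  have hPP : P * P⁻¹ = 1 := mul_nonsing_inv P ((isUnit_iff_isUnit_det P).mp hP)
  have hPP' : P⁻¹ * P = 1 := nonsing_inv_mul P ((isUnit_iff_isUnit_det P).mp hP)
  have key : charmatrix (P * B * P⁻¹) =
      (C : ℂ →+* ℂ[X]).mapMatrix P * charmatrix B * (C : ℂ →+* ℂ[X]).mapMatrix P⁻¹ := by
    unfold charmatrix
    rw [_root_.map_mul, _root_.map_mul, mul_sub, sub_mul]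
    congr 1
    rw [Matrix.mul_assoc,
      (Matrix.scalar_commute (X : ℂ[X]) (fun r => Commute.all _ r) _).eq,
      ← Matrix.mul_assoc, ← _root_.map_mul, hPP, _root_.map_one, Matrix.one_mul]
  rw [Matrix.charpoly, Matrix.charpoly, key, det_mul, det_mul]
  have h1 : ((C : ℂ →+* ℂ[X]).mapMatrix P).det * ((C : ℂ →+* ℂ[X]).mapMatrix P⁻¹).det = 1 := by
    rw [← det_mul, ← _root_.map_mul, hPP, _root_.map_one, det_one]
  rw [mul_right_comm, h1, one_mul]

lemma my_charpoly_diagonal {m : Type*} [Fintype m] [DecidableEq m] (u : m → ℂ) :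
    (Matrix.diagonal u).charpoly = ∏ i, (X - C (u i)) := by
  have : charmatrix (Matrix.diagonal u) = Matrix.diagonal (fun i => X - C (u i)) := by
    ext i j
    by_cases h : i = j
    · subst h; simp
    · rw [charmatrix_apply_ne _ _ _ h, Matrix.diagonal_apply_ne _ h, Matrix.diagonal_apply_ne _ h,
        map_zero, neg_zero]
  rw [Matrix.charpoly, this, det_diagonal]

/-- If a nonzero diagonalizable `(n+1) × (n+1)` complex matrix `A` is similar to `ω • A`,
where `ω = exp(2πi/(n+1))`, then its characteristic polynomial is `X^(n+1) - c^(n+1)`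
for some `c ≠ 0`; i.e., the eigenvalues of `A` are `c, ωc, ..., ωⁿc`. -/
theorem charpoly_eq_pow_sub_pow_of_similar_smul
    (n : ℕ) (hn : 1 ≤ n) (ω : ℂ)
    (hω : ω = Complex.exp (2 * Real.pi * Complex.I / (n + 1)))
    (A : Matrix (Fin (n + 1)) (Fin (n + 1)) ℂ) (hA0 : A ≠ 0)
    (Q : Matrix (Fin (n + 1)) (Fin (n + 1)) ℂ) (u : Fin (n + 1) → ℂ)
    (hQ : IsUnit Q) (hdiag : A = Q * Matrix.diagonal u * Q⁻¹)
    (P : Matrix (Fin (n + 1)) (Fin (n + 1)) ℂ) (hP : IsUnit P)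
    (hsim : P * A * P⁻¹ = ω • A) :
    ∃ c : ℂ, c ≠ 0 ∧ A.charpoly = X ^ (n + 1) - C (c ^ (n + 1)) := by
  -- ω is a primitive (n+1)-st root of unity
  have hωprim : IsPrimitiveRoot ω (n + 1) := by
    rw [hω]
    have := Complex.isPrimitiveRoot_exp (n + 1) (Nat.succ_ne_zero n)
    simpa using this
  -- charpoly of A as a product of linear factors
  have hchar : A.charpoly = ∏ i, (X - C (u i)) := by
    rw [hdiag, my_charpoly_conj _ _ hQ, my_charpoly_diagonal]
  -- ω • A is similar to diagonal (ω • u)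
  have hsm : ω • A = Q * Matrix.diagonal (fun i => ω * u i) * Q⁻¹ := by
    have hd : Matrix.diagonal (fun i => ω * u i) = ω • Matrix.diagonal u := by
      rw [← Matrix.diagonal_smul]; rfl
    rw [hd, Matrix.mul_smul, Matrix.smul_mul, ← hdiag]
  have hchar2 : A.charpoly = ∏ i, (X - C (ω * u i)) := by
    rw [← my_charpoly_conj P A hP, hsim, hsm, my_charpoly_conj _ _ hQ, my_charpoly_diagonal]
  -- The multiset of eigenvalues
  set M : Multiset ℂ := Multiset.map u Finset.univ.val with hM
  have hMcard : Multiset.card M = n + 1 := by simp [hM]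
  have hroots1 : A.charpoly.roots = M := by
    rw [hchar, ← Polynomial.roots_multiset_prod_X_sub_C M]
    congr 1
    rw [hM, Multiset.map_map]
    rw [Finset.prod_eq_multiset_prod]
    rfl
  have hroots2 : A.charpoly.roots = M.map (fun x => ω * x) := by
    rw [hchar2, ← Polynomial.roots_multiset_prod_X_sub_C (M.map (fun x => ω * x))]
    congr 1
    rw [hM, Multiset.map_map, Multiset.map_map]
    rw [Finset.prod_eq_multiset_prod]
    rfl
  have hMinv : M.map (fun x => ω * x) = M := by rw [← hroots2, hroots1]
  -- membership is preserved by multiplication by ω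
  have hstep : ∀ x : ℂ, x ∈ M → ω * x ∈ M := by
    intro x hx
    rw [← hMinv]
    exact Multiset.mem_map_of_mem _ hx
  -- some eigenvalue is nonzero
  have hune : ∃ i, u i ≠ 0 := by
    by_contra h
    push_neg at h
    apply hA0
    have h0 : u = fun _ => (0 : ℂ) := funext h
    rw [hdiag, h0]
    simp
  obtain ⟨i0, hc0⟩ := hune
  set c : ℂ := u i0 with hc
  have hcM : c ∈ M := by
    rw [hM]
    exact Multiset.mem_map_of_mem u (Finset.mem_univ_val i0)
  have hpow : ∀ k : ℕ, ω ^ k * c ∈ M := by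
    intro k
    induction k with
    | zero => simpa using hcM
    | succ k ih =>
      have := hstep _ ih
      rw [pow_succ]
      convert this using 1
      ring
  -- the multiset of powers
  set N : Multiset ℂ := (Multiset.range (n + 1)).map (fun k => ω ^ k * c) with hN
  have hNnodup : N.Nodup := by
    rw [hN]
    refine Multiset.Nodup.map_on ?_ (Multiset.nodup_range (n + 1))
    intro x hx y hy hxy
    rw [Multiset.mem_range] at hx hy
    exact hωprim.pow_inj hx hy (mul_right_cancel₀ hc0 hxy)
  have hNcard : Multiset.card N = n + 1 := by simp [hN]
  have hNM : N = M := by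
    apply Multiset.eq_of_le_of_card_le
    · rw [Multiset.le_iff_subset hNnodup]
      intro x hx
      rw [hN, Multiset.mem_map] at hx
      obtain ⟨k, _, rfl⟩ := hx
      exact hpow k
    · rw [hMcard, hNcard]
  -- now compute the charpoly
  refine ⟨c, hc0, ?_⟩
  calc A.charpoly = ∏ i, (X - C (u i)) := hchar
    _ = (M.map (fun a => X - C a)).prod := by
        rw [hM, Multiset.map_map, Finset.prod_eq_multiset_prod]; rfl
    _ = (N.map (fun a => X - C a)).prod := by rw [hNM]
    _ = ∏ k ∈ Finset.range (n + 1), (X - C (ω ^ k * c)) := by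
        rw [hN, Multiset.map_map, Finset.prod_eq_multiset_prod]; rfl
    _ = X ^ (n + 1) - C (c ^ (n + 1)) :=
        (X_pow_sub_C_eq_prod hωprim (Nat.succ_pos n) rfl).symm
end

section
/- Let n ≥ 1, l ∈ ℤ, ω = exp(2πi/(n+1)) ∈ ℂ and ζ = exp(πi/(n+1)) (so ζ² = ω). Let T be the diagonal (n+1)×(n+1) complex matrix with T_{jj} = ζ^{2j+1−l} (= ω^{j+(1−l)/2}) for 0 ≤ j ≤ n, let J_l be the (n+1)×(n+1) matrix with (J_l)_{ij} = 1 if i + j ≡ l − 1 (mod n+1) and 0 otherwise, and let C be the cyclic shift matrix with C_{jk} = 1 if j ≡ k + 1 (mod n+1) and 0 otherwise. Then: (i) Tᵀ * J_l * T = J_l, and (ii) T * C = ω • (C * T). Moreover, |T_{jj}| = 1 for every j, so for any real diagonal matrix G one has conj(T)ᵀ * G * T = G. -/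
open Matrix
open scoped Fin.IntCast

/-!
Since `T` is diagonal, each identity reduces to a relation between its diagonal entries
`t j = ζ^(2j+1-l)`: `t i * t j = ζ^(2(i+j+1-l)) = ω^(i+j+1-l) = 1` whenever `i + j ≡ l - 1`,
and `t (k+1) = ω * t k`, both because `ζ² = ω` is an `(n+1)`-st root of unity. The entries are
powers of the root of unity `ζ`, hence unimodular, so conjugation by `T` fixes diagonal forms.
-/

namespace Fin

theorem coe_modEq_of_eq_intCast {n : ℕ} [NeZero n] {x : Fin n} {m : ℤ} (h : x = (m : Fin n)) :
    (x : ℤ) ≡ m [ZMOD n] := by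
  have hval : (x : ℤ) = m % n := by
    rw [h, val_intCast,
      Int.toNat_of_nonneg (Int.emod_nonneg m (by exact_mod_cast NeZero.ne n))]
  rw [hval]
  exact Int.mod_modEq m n

theorem coe_add_modEq {n : ℕ} (i j : Fin n) : ((i + j : Fin n) : ℤ) ≡ i + j [ZMOD n] := by
  rw [val_add]
  push_cast
  exact Int.mod_modEq _ _

theorem coe_add_one_modEq {n : ℕ} [NeZero n] (i : Fin n) :
    ((i + 1 : Fin n) : ℤ) ≡ i + 1 [ZMOD n] := by
  have hone : ((1 : Fin n) : ℤ) ≡ 1 [ZMOD n] := by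
    rw [val_one']
    push_cast
    exact Int.mod_modEq _ _
  exact (coe_add_modEq i 1).trans (hone.add_left _)

end Fin

section RootOfUnity

variable {G₀ : Type*} [GroupWithZero G₀] {ζ : G₀}

theorem zpow_eq_zpow_of_modEq (hζ : ζ ≠ 0) {N : ℤ} (hN : ζ ^ N = 1) {a b : ℤ}
    (h : a ≡ b [ZMOD N]) : ζ ^ a = ζ ^ b := by
  obtain ⟨k, hk⟩ := Int.modEq_iff_dvd.1 h
  rw [show b = a + N * k by linarith, zpow_add₀ hζ, _root_.zpow_mul, hN, _root_.one_zpow, mul_one]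

theorem zpow_mul_zpow_eq_one_of_modEq (hζ : ζ ≠ 0) {N : ℕ} (hN : (ζ ^ 2) ^ N = 1) {l i j : ℤ}
    (hij : i + j ≡ l - 1 [ZMOD N]) : ζ ^ (2 * i + 1 - l) * ζ ^ (2 * j + 1 - l) = 1 := by
  have hN' : (ζ ^ (2 : ℤ)) ^ (N : ℤ) = 1 := by exact_mod_cast hN
  rw [← zpow_add₀ hζ, show 2 * i + 1 - l + (2 * j + 1 - l) = 2 * (i + j + 1 - l) by ring,
    _root_.zpow_mul, zpow_eq_zpow_of_modEq (zpow_ne_zero _ hζ) hN' (b := 0), zpow_zero]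
  simpa using (hij.add_right 1).sub_right l

theorem zpow_eq_sq_mul_zpow_of_modEq (hζ : ζ ≠ 0) {N : ℕ} (hN : (ζ ^ 2) ^ N = 1) {l j k : ℤ}
    (hjk : j ≡ k + 1 [ZMOD N]) : ζ ^ (2 * j + 1 - l) = ζ ^ 2 * ζ ^ (2 * k + 1 - l) := by
  have hN' : (ζ ^ (2 : ℤ)) ^ (N : ℤ) = 1 := by exact_mod_cast hN
  have hshift : j - k ≡ 1 [ZMOD N] := by simpa using hjk.sub_right k
  rw [show 2 * j + 1 - l = 2 * (j - k) + (2 * k + 1 - l) by ring, zpow_add₀ hζ, _root_.zpow_mul,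
    zpow_eq_zpow_of_modEq (zpow_ne_zero _ hζ) hN' hshift, zpow_one, zpow_ofNat]

end RootOfUnity

namespace Matrix

variable {ι R : Type*} [DecidableEq ι] [Fintype ι] [CommSemiring R]

theorem diagonal_mul_mul_diagonal_eq_self {A : Matrix ι ι R} {d : ι → R}
    (h : ∀ i j, A i j ≠ 0 → d i * d j = 1) : diagonal d * A * diagonal d = A := by
  ext i j
  rw [mul_diagonal, diagonal_mul]
  by_cases hA : A i j = 0
  · simp [hA]
  · rw [mul_right_comm, h i j hA, one_mul]

theorem diagonal_mul_eq_smul_mul_diagonal {A : Matrix ι ι R} {d : ι → R} {c : R}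
    (h : ∀ i j, A i j ≠ 0 → d i = c * d j) : diagonal d * A = c • (A * diagonal d) := by
  ext i j
  rw [smul_apply, mul_diagonal, diagonal_mul, smul_eq_mul]
  by_cases hA : A i j = 0
  · simp [hA]
  · rw [h i j hA]
    ring

theorem conjTranspose_diagonal_mul_diagonal_mul_diagonal [StarRing R] {d g : ι → R}
    (h : ∀ j, star (d j) * d j = 1) : (diagonal d)ᴴ * diagonal g * diagonal d = diagonal g := by
  rw [diagonal_conjTranspose, diagonal_mul_diagonal, diagonal_mul_diagonal]
  congr 1
  funext j
  rw [mul_right_comm, Pi.star_apply, h j, one_mul]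

end Matrix

theorem toda_automorphism_properties_general
    (n : ℕ) (l : ℤ) (ζ ω : ℂ)
    (hζ : ζ = Complex.exp (Real.pi * Complex.I / (n + 1)))
    (hω : ω = Complex.exp (2 * Real.pi * Complex.I / (n + 1)))
    (T Jl C : Matrix (Fin (n + 1)) (Fin (n + 1)) ℂ)
    (hT : T = Matrix.diagonal (fun j : Fin (n + 1) => ζ ^ (2 * (j : ℤ) + 1 - l)))
    (hJ : Jl = Matrix.of fun i j : Fin (n + 1) =>
        if i + j = ((l - 1 : ℤ) : Fin (n + 1)) then 1 else 0)
    (hC : C = Matrix.of fun j k : Fin (n + 1) => if j = k + 1 then 1 else 0) :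
    Tᵀ * Jl * T = Jl ∧
    T * C = ω • (C * T) ∧
    (∀ j : Fin (n + 1), ‖T j j‖ = 1) ∧
    (∀ g : Fin (n + 1) → ℝ,
      Tᴴ * Matrix.diagonal (fun j => (g j : ℂ)) * T
        = Matrix.diagonal (fun j => (g j : ℂ))) := by
  have hζ0 : ζ ≠ 0 := hζ ▸ Complex.exp_ne_zero _
  have hsq : ζ ^ 2 = ω := by
    rw [hζ, hω, ← Complex.exp_nat_mul]
    congr 1
    push_cast
    ring
  have hroot : (ζ ^ 2) ^ (n + 1) = 1 := by
    simpa [hsq, hω] using (Complex.isPrimitiveRoot_exp (n + 1) n.succ_ne_zero).pow_eq_one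
  have hunit : ∀ j : Fin (n + 1), ‖T j j‖ = 1 := by
    intro j
    rw [hT, diagonal_apply_eq, norm_zpow,
      Complex.norm_eq_one_of_pow_eq_one (by rwa [← pow_mul] at hroot) (by omega), _root_.one_zpow]
  refine ⟨?_, ?_, hunit, fun g => ?_⟩
  · rw [hT, diagonal_transpose]
    refine diagonal_mul_mul_diagonal_eq_self fun i j hij => ?_
    simp only [hJ, of_apply, ne_eq, ite_eq_right_iff, one_ne_zero, imp_false, not_not] at hij
    refine zpow_mul_zpow_eq_one_of_modEq hζ0 hroot ?_
    exact_mod_cast (Fin.coe_add_modEq i j).symm.trans (Fin.coe_modEq_of_eq_intCast hij)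
  · rw [hT, ← hsq]
    refine diagonal_mul_eq_smul_mul_diagonal fun j k hjk => ?_
    simp only [hC, of_apply, ne_eq, ite_eq_right_iff, one_ne_zero, imp_false, not_not] at hjk
    refine zpow_eq_sq_mul_zpow_of_modEq hζ0 hroot ?_
    exact_mod_cast hjk ▸ Fin.coe_add_one_modEq k
  · refine hT ▸ conjTranspose_diagonal_mul_diagonal_mul_diagonal fun j => ?_
    have hnorm := hunit j
    rw [hT, diagonal_apply_eq] at hnorm
    rw [Complex.star_def, Complex.conj_mul', hnorm]
    norm_num

/-- The diagonal matrix `T = diag(ζ^(2j+1-l))` with `ζ = exp(πi/(n+1))` preserves the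
bilinear form `J_l`, intertwines the cyclic shift `C` with `ω • C`, has unimodular
diagonal entries, and preserves any real diagonal Hermitian form. -/
theorem toda_automorphism_properties
    (n : ℕ) (hn : 1 ≤ n) (l : ℤ) (ζ ω : ℂ)
    (hζ : ζ = Complex.exp (Real.pi * Complex.I / (n + 1)))
    (hω : ω = Complex.exp (2 * Real.pi * Complex.I / (n + 1)))
    (T Jl C : Matrix (Fin (n + 1)) (Fin (n + 1)) ℂ)
    (hT : T = Matrix.diagonal (fun j : Fin (n + 1) => ζ ^ (2 * (j : ℤ) + 1 - l)))
    (hJ : Jl = Matrix.of fun i j : Fin (n + 1) =>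
        if i + j = ((l - 1 : ℤ) : Fin (n + 1)) then 1 else 0)
    (hC : C = Matrix.of fun j k : Fin (n + 1) => if j = k + 1 then 1 else 0) :
    Tᵀ * Jl * T = Jl ∧
    T * C = ω • (C * T) ∧
    (∀ j : Fin (n + 1), ‖T j j‖ = 1) ∧
    (∀ g : Fin (n + 1) → ℝ,
      Tᴴ * Matrix.diagonal (fun j => (g j : ℂ)) * T
        = Matrix.diagonal (fun j => (g j : ℂ))) :=
  toda_automorphism_properties_general n l ζ ω hζ hω T Jl C hT hJ hC
end

section
/- Let n ≥ 1, ω = exp(2πi/(n+1)) ∈ ℂ, D = diagonal(1, ω, …, ωⁿ), and let T be an (n+1)×(n+1) complex matrix satisfying T * D = ω • (D * T) and Tᵀ * T = 1 (T preserves the standard symmetric bilinear form). Then there exist a diagonal matrix Δ with all diagonal entries in {1, −1} and a sign ε ∈ {1, −1} such that T = Δ * S_ε * Δ⁻¹, where S_ε is the (n+1)×(n+1) matrix with (S_ε)_{k,k+1} = 1 for 0 ≤ k ≤ n−1, (S_ε)_{n,0} = ε, and all other entries 0. Moreover T^(n+1) = ε • 1. -/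
/-!
Entrywise, `T * D = ω • (D * T)` reads `T k j * (ω ^ j - ω ^ (k + 1)) = 0`; as `ω` is a
primitive `(n + 1)`-th root of unity, `T` is supported on the cyclic superdiagonal, i.e. it is a
weighted cyclic shift with weights `t k = T k (k + 1)`. Then `Tᵀ * T = diagonal (t (j - 1) ^ 2)`,
so every weight is `±1`. Conjugating by the diagonal of partial products
`δ j = t 0 ⋯ t (j - 1)` moves all weights into the corner, where `ε = t 0 ⋯ t n` is left, and the
`(n + 1)`-th power of a weighted cyclic shift is the product of its weights times the identity.
-/

open Matrix

namespace Fin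

variable {M : Type*} [CommMonoid M] {n : ℕ}

theorem partialProd_last (f : Fin n → M) : partialProd f (last n) = ∏ i, f i := by
  rw [partialProd, val_last, List.take_of_length_le (by simp), List.prod_ofFn]

theorem partialProd_mul_self {f : Fin n → M} (hf : ∀ i, f i * f i = 1) (j : Fin (n + 1)) :
    partialProd f j * partialProd f j = 1 := by
  induction j using Fin.induction with
  | zero => simp
  | succ i ih => rw [partialProd_succ, mul_mul_mul_comm, ih, hf, one_mul]

open scoped Fin.NatCast in
theorem prod_range_add_natCast (f : Fin (n + 1) → M) (i : Fin (n + 1)) :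
    ∏ l ∈ Finset.range (n + 1), f (i + l) = ∏ j, f j := by
  rw [← Fin.prod_univ_eq_prod_range (fun l => f (i + l))]
  simpa using Equiv.prod_comp (Equiv.addLeft i) f

end Fin

namespace Matrix

variable {R : Type*} {n : ℕ}

/-- The corner shift `S_ε` is `cyclicShift 1` of the weights `(1, …, 1, ε)`. -/
def cyclicShift [Zero R] (a : Fin (n + 1)) (c : Fin (n + 1) → R) :
    Matrix (Fin (n + 1)) (Fin (n + 1)) R :=
  of fun i j => if j = i + a then c i else 0

theorem cyclicShift_zero [Zero R] (c : Fin (n + 1) → R) : cyclicShift 0 c = diagonal c := by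
  ext i j
  simp [cyclicShift, diagonal_apply, eq_comm]

theorem eq_cyclicShift_of_apply_eq_zero [Zero R] {T : Matrix (Fin (n + 1)) (Fin (n + 1)) R}
    {a : Fin (n + 1)} (hT : ∀ i j, j ≠ i + a → T i j = 0) :
    T = cyclicShift a fun i => T i (i + a) := by
  ext i j
  by_cases h : j = i + a
  · simp [cyclicShift, h]
  · simp [cyclicShift, h, hT i j h]

theorem transpose_cyclicShift [Zero R] (a : Fin (n + 1)) (c : Fin (n + 1) → R) :
    (cyclicShift a c)ᵀ = cyclicShift (-a) fun i => c (i - a) := by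
  ext i j
  simp only [cyclicShift, transpose_apply, of_apply]
  by_cases h : i = j + a
  · simp [h]
  · rw [if_neg h, if_neg (by rintro rfl; simp at h)]

theorem cyclicShift_mul_cyclicShift [NonUnitalNonAssocSemiring R] (a b : Fin (n + 1))
    (c d : Fin (n + 1) → R) :
    cyclicShift a c * cyclicShift b d = cyclicShift (a + b) fun i => c i * d (i + a) := by
  ext i j
  rw [mul_apply, Finset.sum_eq_single (i + a)]
  · simp [cyclicShift, add_assoc]
  · intro k _ hk
    simp [cyclicShift, hk]
  · simp

theorem transpose_cyclicShift_mul_self [NonUnitalNonAssocSemiring R] (a : Fin (n + 1))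
    (c : Fin (n + 1) → R) :
    (cyclicShift a c)ᵀ * cyclicShift a c = diagonal fun i => c (i - a) * c (i - a) := by
  rw [transpose_cyclicShift, cyclicShift_mul_cyclicShift, neg_add_cancel, cyclicShift_zero]
  simp_rw [← sub_eq_add_neg]

theorem cyclicShift_pow [CommSemiring R] (a : Fin (n + 1)) (c : Fin (n + 1) → R) (m : ℕ) :
    cyclicShift a c ^ m =
      cyclicShift (m • a) fun i => ∏ l ∈ Finset.range m, c (i + l • a) := by
  induction m with
  | zero => simp [cyclicShift_zero]
  | succ m ih =>
    simp [pow_succ, ih, cyclicShift_mul_cyclicShift, succ_nsmul, Finset.prod_range_succ]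

open scoped Fin.NatCast in
theorem cyclicShift_one_pow_succ [CommSemiring R] (c : Fin (n + 1) → R) :
    cyclicShift 1 c ^ (n + 1) = (∏ i, c i) • 1 := by
  simp only [cyclicShift_pow, nsmul_one, Fin.natCast_self, Fin.prod_range_add_natCast,
    cyclicShift_zero, smul_one_eq_diagonal]

theorem diagonal_mul_cyclicShift_mul_diagonal [NonUnitalNonAssocSemiring R]
    (d e c : Fin (n + 1) → R) (a : Fin (n + 1)) :
    diagonal d * cyclicShift a c * diagonal e = cyclicShift a fun i => d i * c i * e (i + a) := by
  ext i j
  by_cases h : j = i + a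
  · simp [cyclicShift, h, mul_diagonal, diagonal_mul]
  · simp [cyclicShift, h, mul_diagonal, diagonal_mul]

theorem apply_eq_zero_of_mul_diagonal_eq_smul [CommRing R] [IsDomain R] {ω : R}
    (hω : IsPrimitiveRoot ω (n + 1)) {T : Matrix (Fin (n + 1)) (Fin (n + 1)) R}
    (hT : T * diagonal (fun j : Fin (n + 1) => ω ^ (j : ℕ)) =
      ω • (diagonal (fun j : Fin (n + 1) => ω ^ (j : ℕ)) * T))
    {i j : Fin (n + 1)} (hij : j ≠ i + 1) : T i j = 0 := by
  by_contra hTij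
  have hpow : ω ^ (j : ℕ) = ω ^ ((i : ℕ) + 1) := by
    have hTij' := congr_fun₂ hT i j
    rw [mul_diagonal, Matrix.smul_apply, diagonal_mul, smul_eq_mul] at hTij'
    exact mul_left_cancel₀ hTij (by rw [hTij']; ring)
  rw [(hω.isOfFinOrder n.succ_ne_zero).pow_inj_mod, ← hω.eq_orderOf] at hpow
  apply hij
  ext
  rw [Fin.val_add, Fin.val_one', Nat.add_mod_mod, ← hpow, Nat.mod_eq_of_lt j.isLt]

theorem inv_diagonal_of_mul_self_eq_one {ι : Type*} [Fintype ι] [DecidableEq ι] [CommRing R]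
    {d : ι → R} (hd : ∀ i, d i * d i = 1) : (diagonal d)⁻¹ = diagonal d :=
  inv_eq_left_inv (by rw [diagonal_mul_diagonal, funext hd, diagonal_one])

theorem cyclicShift_one_eq_diagonal_mul_cyclicShift_mul_diagonal [CommSemiring R]
    {t : Fin (n + 1) → R} (ht : ∀ i, t i * t i = 1) :
    cyclicShift 1 t =
      diagonal (Fin.partialProd fun i : Fin n => t i.castSucc) *
        cyclicShift 1 (fun i => if i = Fin.last n then ∏ j, t j else 1) *
        diagonal (Fin.partialProd fun i : Fin n => t i.castSucc) := by
  rw [diagonal_mul_cyclicShift_mul_diagonal]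
  congr 1
  funext i
  induction i using Fin.lastCases with
  | last =>
    rw [if_pos rfl, Fin.last_add_one, Fin.partialProd_zero, mul_one, Fin.prod_univ_castSucc,
      ← Fin.partialProd_last, ← mul_assoc, Fin.partialProd_mul_self (fun i => ht _), one_mul]
  | cast i =>
    rw [if_neg (Fin.castSucc_lt_last i).ne, Fin.coeSucc_eq_succ, Fin.partialProd_succ, mul_one,
      ← mul_assoc, Fin.partialProd_mul_self (fun i => ht _), one_mul]

end Matrix

theorem intertwiner_normal_form_general
    (n : ℕ) (ω : ℂ)
    (hω : ω = Complex.exp (2 * Real.pi * Complex.I / (n + 1)))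
    (T : Matrix (Fin (n + 1)) (Fin (n + 1)) ℂ)
    (hTD : T * Matrix.diagonal (fun j : Fin (n + 1) => ω ^ (j : ℕ))
        = ω • (Matrix.diagonal (fun j : Fin (n + 1) => ω ^ (j : ℕ)) * T))
    (hTT : Tᵀ * T = 1) :
    ∃ (δ : Fin (n + 1) → ℂ) (ε : ℂ),
      (∀ j, δ j = 1 ∨ δ j = -1) ∧ (ε = 1 ∨ ε = -1) ∧
      T = Matrix.diagonal δ *
            (Matrix.of fun k j : Fin (n + 1) =>
              if j = k + 1 then (if k = Fin.last n then ε else 1) else 0) *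
            (Matrix.diagonal δ)⁻¹ ∧
      T ^ (n + 1) = ε • (1 : Matrix (Fin (n + 1)) (Fin (n + 1)) ℂ) := by
  have hprim : IsPrimitiveRoot ω (n + 1) := by
    simpa [hω] using Complex.isPrimitiveRoot_exp (n + 1) n.succ_ne_zero
  set t : Fin (n + 1) → ℂ := fun k => T k (k + 1)
  have hT : T = cyclicShift 1 t :=
    eq_cyclicShift_of_apply_eq_zero fun _ _ => apply_eq_zero_of_mul_diagonal_eq_smul hprim hTD
  have ht : ∀ k, t k * t k = 1 := fun k => by
    simpa [hT, transpose_cyclicShift_mul_self] using congr_fun₂ hTT (k + 1) (k + 1)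
  have hδ := Fin.partialProd_mul_self fun i : Fin n => ht i.castSucc
  have hε : (∏ k, t k) * ∏ k, t k = 1 := by
    rw [← Finset.prod_mul_distrib]
    exact Finset.prod_eq_one fun k _ => ht k
  refine ⟨Fin.partialProd fun i : Fin n => t i.castSucc, ∏ k, t k,
    fun j => mul_self_eq_one_iff.mp (hδ j), mul_self_eq_one_iff.mp hε, ?_, ?_⟩
  · rw [inv_diagonal_of_mul_self_eq_one hδ, hT]
    exact cyclicShift_one_eq_diagonal_mul_cyclicShift_mul_diagonal ht
  · rw [hT, cyclicShift_one_pow_succ]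

/-- An `η`-orthogonal intertwiner `T` (with `T * D = ω • (D * T)` and `Tᵀ * T = 1`)
is conjugate, by a diagonal matrix with `±1` entries, to the ε-corner cyclic shift `S_ε`
(ones on the superdiagonal, `ε` in the bottom-left corner), and `T^(n+1) = ε • 1`. -/
theorem intertwiner_normal_form
    (n : ℕ) (hn : 1 ≤ n) (ω : ℂ)
    (hω : ω = Complex.exp (2 * Real.pi * Complex.I / (n + 1)))
    (T : Matrix (Fin (n + 1)) (Fin (n + 1)) ℂ)
    (hTD : T * Matrix.diagonal (fun j : Fin (n + 1) => ω ^ (j : ℕ))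
        = ω • (Matrix.diagonal (fun j : Fin (n + 1) => ω ^ (j : ℕ)) * T))
    (hTT : Tᵀ * T = 1) :
    ∃ (δ : Fin (n + 1) → ℂ) (ε : ℂ),
      (∀ j, δ j = 1 ∨ δ j = -1) ∧ (ε = 1 ∨ ε = -1) ∧
      T = Matrix.diagonal δ *
            (Matrix.of fun k j : Fin (n + 1) =>
              if j = k + 1 then (if k = Fin.last n then ε else 1) else 0) *
            (Matrix.diagonal δ)⁻¹ ∧
      T ^ (n + 1) = ε • (1 : Matrix (Fin (n + 1)) (Fin (n + 1)) ℂ) :=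
  intertwiner_normal_form_general n ω hω T hTD hTT
end

section
/- Let n ≥ 1 and w : ZMod (n+1) → ℝ. Let G = diagonal(fun j => exp (w j)) and let C be the (n+1)×(n+1) real matrix with C_{jk} = 1 if j = k + 1 in ZMod (n+1) and 0 otherwise. Then C * (G⁻¹ * Cᵀ * G) − (G⁻¹ * Cᵀ * G) * C = diagonal(fun j => exp (w j − w (j−1)) − exp (w (j+1) − w j)). -/
open Matrix

/-- The commutator of the cyclic shift `C` (the Higgs field) with its `g`-adjoint
`G⁻¹ * Cᵀ * G`, where `G = diagonal (exp ∘ w)`, is the diagonal matrix with entries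
`exp (w j - w (j-1)) - exp (w (j+1) - w j)`. -/
theorem higgs_commutator_eq_toda_diagonal
    (n : ℕ) (hn : 1 ≤ n) (w : ZMod (n + 1) → ℝ)
    (G C : Matrix (ZMod (n + 1)) (ZMod (n + 1)) ℝ)
    (hG : G = Matrix.diagonal fun j => Real.exp (w j))
    (hC : C = Matrix.of fun j k : ZMod (n + 1) => if j = k + 1 then 1 else 0) :
    C * (G⁻¹ * Cᵀ * G) - (G⁻¹ * Cᵀ * G) * C
      = Matrix.diagonal fun j =>
          Real.exp (w j - w (j - 1)) - Real.exp (w (j + 1) - w j) := by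
  subst hG hC
  have hinv : (Matrix.diagonal fun j => Real.exp (w j))⁻¹
      = Matrix.diagonal fun j => Real.exp (-w j) := by
    rw [Matrix.inv_eq_right_inv]
    rw [Matrix.diagonal_mul_diagonal]
    simp [← Real.exp_add]
  rw [hinv]
  have hA : (Matrix.diagonal fun j => Real.exp (-w j)) *
        (Matrix.of fun j k : ZMod (n + 1) => if j = k + 1 then (1:ℝ) else 0)ᵀ *
        (Matrix.diagonal fun j => Real.exp (w j))
      = Matrix.of (fun i k : ZMod (n+1) => if k = i + 1 then Real.exp (w k - w i) else 0) := by
    ext i k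
    simp [Matrix.diagonal_mul, Matrix.mul_diagonal, ← Real.exp_add, mul_ite, ite_mul,
      sub_eq_neg_add]
  rw [hA]
  ext i j
  simp only [Matrix.sub_apply, Matrix.mul_apply, Matrix.of_apply, ite_mul, mul_ite,
    one_mul, mul_one, zero_mul, mul_zero]
  have key : ∀ x : ZMod (n+1), (j = x + 1) ↔ (x = j - 1) := fun x => by
    rw [eq_sub_iff_add_eq, eq_comm]
  simp only [key, Finset.sum_ite_eq', Finset.mem_univ, if_true, sub_add_cancel]
  by_cases h : i = j
  · subst h; simp [Matrix.diagonal]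
  · simp [Matrix.diagonal, h, Ne.symm h, fun hh : j + 1 = i + 1 => h (by
      exact (add_left_injective 1 hh).symm)]
end

section
/- Let n ≥ 1, m ∈ ℤ, and set l = 2m. Let w : ZMod (n+1) → ℝ satisfy the anti-symmetry condition w j + w (l − 1 − j) = 0 for all j ∈ ZMod (n+1). Define w̃ : ZMod (n+1) → ℝ by w̃ j = w (j + m). Then w̃ j + w̃ (n − j) = 0 for all j ∈ ZMod (n+1) (note that n = −1 in ZMod (n+1)). -/
/-- Case `l = 2m` (l even) of Theorem 4.1: if `w` satisfies the anti-symmetry condition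
with parameter `l = 2m`, then the shift `w̃ j = w (j + m)` satisfies the anti-symmetry
condition with parameter `l = 0`, i.e. `w̃ j + w̃ (n - j) = 0`. -/
theorem antisymmetry_shift_even
    (n : ℕ) (hn : 1 ≤ n) (m : ℤ) (l : ℤ) (hl : l = 2 * m)
    (w : ZMod (n + 1) → ℝ)
    (hw : ∀ j : ZMod (n + 1), w j + w (((l - 1 : ℤ) : ZMod (n + 1)) - j) = 0) :
    ∀ j : ZMod (n + 1),
      w (j + (m : ZMod (n + 1)))
        + w (((n : ℕ) : ZMod (n + 1)) - j + (m : ZMod (n + 1))) = 0 := by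
  intro j
  have h := hw (j + (m : ZMod (n + 1)))
  have hne : ((n : ℕ) : ZMod (n + 1)) = -1 := by
    have : ((n + 1 : ℕ) : ZMod (n + 1)) = 0 := by
      exact_mod_cast ZMod.natCast_self (n + 1)
    push_cast at this
    linear_combination this
  rw [hne]
  convert h using 3
  subst hl
  push_cast
  ring
end

section
/- Let n ≥ 1, m ∈ ℤ, and set l = 2m + 1. Let w : ZMod (n+1) → ℝ satisfy the anti-symmetry condition w j + w (l − 1 − j) = 0 for all j ∈ ZMod (n+1). Define w̃ : ZMod (n+1) → ℝ by w̃ j = w (j + m). Then w̃ j + w̃ (n + 1 − j) = 0 for all j ∈ ZMod (n+1) (note that n + 1 − j = −j in ZMod (n+1)). -/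
/-- Case `l = 2m + 1` (l odd) of Theorem 4.1: if `w` satisfies the anti-symmetry
condition with parameter `l = 2m + 1`, then the shift `w̃ j = w (j + m)` satisfies the
anti-symmetry condition with parameter `l = 1`, i.e. `w̃ j + w̃ (n + 1 - j) = 0`. -/
theorem antisymmetry_shift_odd
    (n : ℕ) (hn : 1 ≤ n) (m : ℤ) (l : ℤ) (hl : l = 2 * m + 1)
    (w : ZMod (n + 1) → ℝ)
    (hw : ∀ j : ZMod (n + 1), w j + w (((l - 1 : ℤ) : ZMod (n + 1)) - j) = 0) :
    ∀ j : ZMod (n + 1),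
      w (j + (m : ZMod (n + 1)))
        + w (((n : ℕ) : ZMod (n + 1)) + 1 - j + (m : ZMod (n + 1))) = 0 := by
  intro j
  have h0 : ((n : ℕ) : ZMod (n + 1)) + 1 = 0 := by
    have : (((n + 1 : ℕ)) : ZMod (n + 1)) = 0 := by
      exact_mod_cast ZMod.natCast_self (n + 1)
    push_cast at this
    linear_combination this
  have := hw (j + (m : ZMod (n + 1)))
  rw [hl] at this
  push_cast at this
  rw [h0]
  convert this using 3
  ring
end

section
/- Let s ≥ 1 and m ∈ ℤ, set n = 2s and l = 2m + 1, and work in ZMod (n+1) = ZMod (2s+1). Let w : ZMod (n+1) → ℝ satisfy the anti-symmetry condition w j + w (l − 1 − j) = 0 for all j ∈ ZMod (n+1). Define w̃ : ZMod (n+1) → ℝ by w̃ j = w (j + m − s). Then w̃ j + w̃ (n − j) = 0 for all j ∈ ZMod (n+1). -/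
/-- Case `l = 2m + 1` odd and `n = 2s` even of Theorem 4.1: if `w` satisfies the
anti-symmetry condition with parameter `l = 2m + 1` on `ZMod (2s+1)`, then the shift
`w̃ j = w (j + m - s)` satisfies the anti-symmetry condition with parameter `l = 0`,
i.e. `w̃ j + w̃ (n - j) = 0` with `n = 2s`. -/
theorem antisymmetry_shift_odd_even
    (s : ℕ) (hs : 1 ≤ s) (m : ℤ) (n : ℕ) (hn : n = 2 * s)
    (l : ℤ) (hl : l = 2 * m + 1)
    (w : ZMod (2 * s + 1) → ℝ)
    (hw : ∀ j : ZMod (2 * s + 1), w j + w (((l - 1 : ℤ) : ZMod (2 * s + 1)) - j) = 0) :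
    ∀ j : ZMod (2 * s + 1),
      w (j + ((m - s : ℤ) : ZMod (2 * s + 1)))
        + w (((n : ℕ) : ZMod (2 * s + 1)) - j + ((m - s : ℤ) : ZMod (2 * s + 1))) = 0 := by
  intro j
  have h := hw (j + ((m - s : ℤ) : ZMod (2 * s + 1)))
  have key : ((l - 1 : ℤ) : ZMod (2 * s + 1)) - (j + ((m - s : ℤ) : ZMod (2 * s + 1)))
      = ((n : ℕ) : ZMod (2 * s + 1)) - j + ((m - s : ℤ) : ZMod (2 * s + 1)) := by
    subst hl hn
    have hmod : ((2 * s + 1 : ℕ) : ZMod (2 * s + 1)) = 0 := ZMod.natCast_self _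
    push_cast at hmod ⊢
    ring
  rw [key] at h
  exact h
end

section
/- Let n ≥ 1 and l ∈ ℤ, and let w : ZMod (n+1) → ℝ satisfy the anti-symmetry condition w j + w (l − 1 − j) = 0 for all j ∈ ZMod (n+1). Then there exists s ∈ ZMod (n+1) such that the shifted function w̃ j := w (j + s) satisfies: if l is even or n is even, then w̃ j + w̃ (n − j) = 0 for all j ∈ ZMod (n+1); and otherwise (l odd and n odd), w̃ j + w̃ (n + 1 − j) = 0 for all j ∈ ZMod (n+1). -/
/-- Theorem 4.1 (Theorem 1.2) of the paper: any anti-symmetry condition with parameter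
`l ∈ ℤ` is, after a cyclic index shift `s`, the anti-symmetry condition with `l = 0`
(when `l` is even or `n` is even) or with `l = 1` (otherwise). -/
theorem antisymmetry_reduces_to_l_zero_or_one
    (n : ℕ) (hn : 1 ≤ n) (l : ℤ) (w : ZMod (n + 1) → ℝ)
    (hw : ∀ j : ZMod (n + 1), w j + w (((l - 1 : ℤ) : ZMod (n + 1)) - j) = 0) :
    ∃ s : ZMod (n + 1),
      ((Even l ∨ Even n) →
        ∀ j : ZMod (n + 1), w (j + s) + w (((n : ℕ) : ZMod (n + 1)) - j + s) = 0) ∧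
      (¬(Even l ∨ Even n) →
        ∀ j : ZMod (n + 1), w (j + s) + w (((n : ℕ) : ZMod (n + 1)) + 1 - j + s) = 0) := by
  have hn1 : ((n : ℕ) : ZMod (n + 1)) = -1 := by
    have h := ZMod.natCast_self (n + 1)
    push_cast at h
    linear_combination h
  by_cases hl : Even l
  · -- l = k + k, take s = k
    obtain ⟨k, hk⟩ := hl
    refine ⟨((k : ℤ) : ZMod (n + 1)), fun _ j => ?_, fun h => absurd (Or.inl ⟨k, hk⟩) h⟩
    have key : ((l - 1 : ℤ) : ZMod (n + 1)) - (j + ((k : ℤ) : ZMod (n + 1)))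
        = ((n : ℕ) : ZMod (n + 1)) - j + ((k : ℤ) : ZMod (n + 1)) := by
      rw [hn1]
      have : ((l - 1 : ℤ) : ZMod (n + 1)) = ((k : ℤ) : ZMod (n + 1)) + ((k : ℤ) : ZMod (n + 1)) - 1 := by
        rw [hk]; push_cast; ring
      rw [this]; ring
    rw [← key]
    exact hw _
  · by_cases hne : Even n
    · -- l odd, n even: l + n + 1 = k + k, take s = k
      have hev : Even (l + n + 1) := by
        obtain ⟨m, hm⟩ := hne
        rcases Int.even_or_odd l with h | h
        · exact absurd h hl
        · obtain ⟨t, ht⟩ := h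
          exact ⟨t + m + 1, by rw [ht, hm]; push_cast; ring⟩
      obtain ⟨k, hk⟩ := hev
      refine ⟨((k : ℤ) : ZMod (n + 1)), fun _ j => ?_, fun h => absurd (Or.inr hne) h⟩
      have key : ((l - 1 : ℤ) : ZMod (n + 1)) - (j + ((k : ℤ) : ZMod (n + 1)))
          = ((n : ℕ) : ZMod (n + 1)) - j + ((k : ℤ) : ZMod (n + 1)) := by
        rw [hn1]
        have hl' : (l : ℤ) = k + k - n - 1 := by linarith [hk]
        have : ((l - 1 : ℤ) : ZMod (n + 1)) = ((k : ℤ) : ZMod (n + 1)) + ((k : ℤ) : ZMod (n + 1))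
            - ((n : ℕ) : ZMod (n + 1)) - 2 := by
          rw [show (l - 1 : ℤ) = k + k - n - 2 by linarith]
          push_cast; ring
        rw [this, hn1]; ring
      rw [← key]
      exact hw _
    · -- l odd, n odd: l - 1 = k + k, take s = k
      have hev : Even (l - 1) := by
        rcases Int.even_or_odd l with h | h
        · exact absurd h hl
        · obtain ⟨t, ht⟩ := h
          exact ⟨t, by rw [ht]; ring⟩
      obtain ⟨k, hk⟩ := hev
      refine ⟨((k : ℤ) : ZMod (n + 1)), fun h => absurd h (by simp [hl, hne]), fun _ j => ?_⟩
      have key : ((l - 1 : ℤ) : ZMod (n + 1)) - (j + ((k : ℤ) : ZMod (n + 1)))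
          = ((n : ℕ) : ZMod (n + 1)) + 1 - j + ((k : ℤ) : ZMod (n + 1)) := by
        rw [hn1]
        have : ((l - 1 : ℤ) : ZMod (n + 1)) = ((k : ℤ) : ZMod (n + 1)) + ((k : ℤ) : ZMod (n + 1)) := by
          rw [hk]; push_cast; ring
        rw [this]; ring
      rw [← key]
      exact hw _
end

section
/- Let m ≥ 2 and n = 2m − 1, and let w : ZMod (2m) → ℝ → ℝ be a family of functions such that (radial tt*-Toda equation) for every j ∈ ZMod (2m) and every r > 0: deriv (deriv (w j)) r + (deriv (w j) r)/r = 4·(exp (w j r − w (j−1) r) − exp (w (j+1) r − w j r)), and (anti-symmetry with l = 0) w j + w (−1 − j) = 0 for all j ∈ ZMod (2m). Define v_i := w i for i ∈ Fin m (via the natural map Fin m → ZMod (2m)). Then for every r > 0: deriv (deriv v_0) r + (deriv v_0 r)/r = 4·(exp (2·v_0 r) − exp (v_1 r − v_0 r)); for every i with 1 ≤ i ≤ m − 2: deriv (deriv v_i) r + (deriv v_i r)/r = 4·(exp (v_i r − v_{i−1} r) − exp (v_{i+1} r − v_i r)); and deriv (deriv v_{m−1}) r + (deriv v_{m−1} r)/r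 = 4·(exp (v_{m−1} r − v_{m−2} r) − exp (−2·v_{m−1} r)). -/
/-- Case `(n, l) = (2m - 1, 0)` of Corollary 4.2: a radial solution of the tt*-Toda
equation with `n = 2m - 1` and anti-symmetry condition `l = 0` reduces to a system of
`m` unknown functions `v_0, ..., v_{m-1}` with `a = b = 2`. -/
theorem radial_toda_reduction_odd_n_l_zero
    (m : ℕ) (hm : 2 ≤ m) (w : ZMod (2 * m) → ℝ → ℝ)
    (htoda : ∀ j : ZMod (2 * m), ∀ r : ℝ, 0 < r →
      deriv (deriv (w j)) r + deriv (w j) r / r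
        = 4 * (Real.exp (w j r - w (j - 1) r) - Real.exp (w (j + 1) r - w j r)))
    (hanti : ∀ j : ZMod (2 * m), w j + w (-1 - j) = 0)
    (v : Fin m → ℝ → ℝ)
    (hv : ∀ i : Fin m, v i = w (((i : ℕ) : ZMod (2 * m)))) :
    (∀ r : ℝ, 0 < r →
      deriv (deriv (v ⟨0, by omega⟩)) r + deriv (v ⟨0, by omega⟩) r / r
        = 4 * (Real.exp (2 * v ⟨0, by omega⟩ r)
            - Real.exp (v ⟨1, by omega⟩ r - v ⟨0, by omega⟩ r))) ∧
    (∀ i : ℕ, (_ : 1 ≤ i) → (_ : i ≤ m - 2) → ∀ r : ℝ, 0 < r →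
      deriv (deriv (v ⟨i, by omega⟩)) r + deriv (v ⟨i, by omega⟩) r / r
        = 4 * (Real.exp (v ⟨i, by omega⟩ r - v ⟨i - 1, by omega⟩ r)
            - Real.exp (v ⟨i + 1, by omega⟩ r - v ⟨i, by omega⟩ r))) ∧
    (∀ r : ℝ, 0 < r →
      deriv (deriv (v ⟨m - 1, by omega⟩)) r + deriv (v ⟨m - 1, by omega⟩) r / r
        = 4 * (Real.exp (v ⟨m - 1, by omega⟩ r - v ⟨m - 2, by omega⟩ r)
            - Real.exp (-(2 * v ⟨m - 1, by omega⟩ r)))) := by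
  have hanti' : ∀ j : ZMod (2 * m), ∀ r : ℝ, w (-1 - j) r = - w j r := by
    intro j r
    have h := congrFun (hanti j) r
    simp only [Pi.add_apply, Pi.zero_apply] at h
    linarith
  refine ⟨?_, ?_, ?_⟩
  · intro r hr
    have h := htoda 0 r hr
    have e1 : w (0 - 1 : ZMod (2 * m)) r = - w 0 r := by
      simpa using hanti' 0 r
    rw [e1] at h
    simp only [hv]
    push_cast
    rw [h]
    ring_nf
  · intro i h1 h2 r hr
    have h := htoda ((i : ℕ) : ZMod (2 * m)) r hr
    have e1 : (((i - 1 : ℕ)) : ZMod (2 * m)) = ((i : ℕ) : ZMod (2 * m)) - 1 := by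
      push_cast [Nat.cast_sub h1]; ring
    have e2 : (((i + 1 : ℕ)) : ZMod (2 * m)) = ((i : ℕ) : ZMod (2 * m)) + 1 := by
      push_cast; ring
    simp only [hv, e1, e2]
    exact h
  · intro r hr
    have h := htoda ((m - 1 : ℕ) : ZMod (2 * m)) r hr
    have e1 : (((m - 2 : ℕ)) : ZMod (2 * m)) = ((m - 1 : ℕ) : ZMod (2 * m)) - 1 := by
      have : m - 2 = (m - 1) - 1 := by omega
      rw [this, Nat.cast_sub (by omega)]
      push_cast; ring
    have e2 : (-1 - ((m - 1 : ℕ) : ZMod (2 * m))) = ((m - 1 : ℕ) : ZMod (2 * m)) + 1 := by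
      have h2m : ((2 * m : ℕ) : ZMod (2 * m)) = 0 := ZMod.natCast_self _
      have : ((m - 1 : ℕ) : ZMod (2 * m)) = (m : ZMod (2 * m)) - 1 := by
        rw [Nat.cast_sub (by omega)]; push_cast; ring
      rw [this]
      push_cast at h2m
      linear_combination -h2m
    have e3 : w (((m - 1 : ℕ) : ZMod (2 * m)) + 1) r = - w ((m - 1 : ℕ) : ZMod (2 * m)) r := by
      rw [← e2]; exact hanti' _ r
    rw [e3] at h
    rw [← e1] at h
    simp only [hv]
    rw [h]
    ring_nf
end
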